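/- Let f : F_{2^n} → F_{2^n} be an APN map. Then M_1(f) + M_2(f) ≥ 1; that is, there exists at least one element of F_{2^n} with exactly one or exactly two preimages under f. -/

import Mathlib

open Finset
open scoped Classical

/-- Number of preimages of `y` under `f`. -/
noncomputable def preCard {F : Type*} [Fintype F] (f : F → F) (y : F) : ℕ :=
  (Finset.univ.filter fun x => f x = y).card

/-- `M_r(f)`: the number of elements with exactly `r` preimages under `f`. -/
noncomputable def Mcount {F : Type*} [Fintype F] (f : F → F) (r : ℕ) : ℕ :=
  (Finset.univ.filter fun y => preCard f y = r).card

/-- `f` is almost perfect nonlinear: every equation `f (x+a) + f x = b` with `a ≠ 0`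
has at most two solutions. -/
def IsAPN {F : Type*} [Field F] [Fintype F] (f : F → F) : Prop :=
  ∀ a b : F, a ≠ 0 → (Finset.univ.filter fun x => f (x + a) + f x = b).card ≤ 2

/-! If no value of `f` had one or two preimages, every fibre would have size `0` or at least `3`,
so the number `∑ y, preCard f y ^ 2` of pairs `(x, x')` with `f x = f x'` would be at least
`3 q`, where `q = |F|`. Writing `x' = x + a`, the same pairs are counted by
`∑ a, #{x | f (x + a) = f x}`: the term `a = 0` contributes `q`, and in characteristic two
`f (x + a) = f x` is the APN equation with `b = 0`, so each of the other `q - 1` terms is at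
most `2`. Hence that number is at most `3 q - 2`. -/

section Fibres

variable {F : Type*} [Fintype F] (f : F → F)

theorem Mcount_eq_zero_iff (r : ℕ) : Mcount f r = 0 ↔ ∀ y, preCard f y ≠ r := by
  simp [Mcount, Finset.filter_eq_empty_iff]

theorem sum_preCard : ∑ y, preCard f y = Fintype.card F :=
  (Finset.card_eq_sum_card_fiberwise fun x _ => mem_univ (f x)).symm

theorem sum_preCard_sq : ∑ y, preCard f y ^ 2 = #{p : F × F | f p.1 = f p.2} := by
  rw [Finset.card_eq_sum_card_fiberwise (f := fun p => f p.1) (t := univ) fun p _ => mem_univ _]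
  refine Finset.sum_congr rfl fun y _ => ?_
  have hfibre : ({p : F × F | f p.1 = f p.2} : Finset _).filter (fun p => f p.1 = y) =
      (univ.filter fun x => f x = y) ×ˢ (univ.filter fun x => f x = y) := by
    ext ⟨x, x'⟩
    simp only [mem_filter, mem_univ, true_and, mem_product]
    constructor
    · rintro ⟨hxx', rfl⟩
      exact ⟨rfl, hxx'.symm⟩
    · rintro ⟨rfl, hx'⟩
      exact ⟨hx'.symm, rfl⟩
  rw [hfibre, card_product, sq, preCard]

theorem three_mul_card_le_sum_preCard_sq (hfib : ∀ y, preCard f y ≠ 1 ∧ preCard f y ≠ 2) :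
    3 * Fintype.card F ≤ ∑ y, preCard f y ^ 2 := by
  rw [← sum_preCard f, mul_sum]
  refine sum_le_sum fun y _ => ?_
  obtain ⟨h1, h2⟩ := hfib y
  rcases Nat.eq_zero_or_pos (preCard f y) with h0 | hpos
  · simp [h0]
  · rw [sq]
    exact Nat.mul_le_mul_right _ (by omega)

theorem card_pairs_eq_sum_card_shift [AddGroup F] :
    #{p : F × F | f p.1 = f p.2} = ∑ a, #{x | f (x + a) = f x} := by
  simp only [card_filter, Fintype.sum_prod_type]
  calc ∑ x, ∑ y, (if f x = f y then 1 else 0)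
      = ∑ x, ∑ a, if f (x + a) = f x then 1 else 0 := sum_congr rfl fun x _ => by
        rw [← Equiv.sum_comp (Equiv.addLeft x)]
        simp only [Equiv.coe_addLeft, @eq_comm _ (f x)]
    _ = _ := sum_comm

end Fibres

section APN

variable {F : Type*} [Field F] [Fintype F] [CharP F 2] {f : F → F}

theorem IsAPN.card_add_eq_le_two (hf : IsAPN f) {a : F} (ha : a ≠ 0) :
    #{x | f (x + a) = f x} ≤ 2 := by
  simpa only [CharTwo.add_eq_zero] using hf a 0 ha

theorem IsAPN.sum_preCard_sq_add_two_le (hf : IsAPN f) :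
    ∑ y, preCard f y ^ 2 + 2 ≤ 3 * Fintype.card F := by
  rw [sum_preCard_sq, card_pairs_eq_sum_card_shift, ← add_sum_erase _ _ (mem_univ 0)]
  have hrest : ∑ a ∈ univ.erase 0, #{x | f (x + a) = f x} ≤ 2 * (Fintype.card F - 1) := by
    calc ∑ a ∈ univ.erase 0, #{x | f (x + a) = f x}
        ≤ ∑ _a ∈ univ.erase (0 : F), 2 :=
          sum_le_sum fun a ha => hf.card_add_eq_le_two (ne_of_mem_erase ha)
      _ = 2 * (Fintype.card F - 1) := by
          rw [sum_const, card_erase_of_mem (mem_univ 0), card_univ, smul_eq_mul, mul_comm]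
  have hzero : #{x | f (x + 0) = f x} = Fintype.card F := by simp
  have hpos : 0 < Fintype.card F := Fintype.card_pos
  omega

end APN

theorem apn_M1_add_M2_ge_one_general {F : Type*} [Field F] [Fintype F] [CharP F 2]
    {f : F → F} (hf : IsAPN f) :
    1 ≤ Mcount f 1 + Mcount f 2 := by
  by_contra! h
  have hfib : ∀ y, preCard f y ≠ 1 ∧ preCard f y ≠ 2 := fun y =>
    ⟨(Mcount_eq_zero_iff f 1).mp (by omega) y, (Mcount_eq_zero_iff f 2).mp (by omega) y⟩
  have hlower := three_mul_card_le_sum_preCard_sq f hfib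
  have hupper := hf.sum_preCard_sq_add_two_le
  omega

/-- an APN map on `F_{2^n}` satisfies `M₁(f) + M₂(f) ≥ 1`: some element has
exactly one or exactly two preimages. -/
theorem apn_M1_add_M2_ge_one {F : Type*} [Field F] [Fintype F] [CharP F 2] {n : ℕ}
    (hn : 0 < n) (hcard : Fintype.card F = 2 ^ n) {f : F → F} (hf : IsAPN f) :
    1 ≤ Mcount f 1 + Mcount f 2 :=
  apn_M1_add_M2_ge_one_general hf
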